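/- In the setting of an algebraic Hilbert–Poincaré complex with boundary (E = E_0 ⊕ E_1, b = [[b_0,h],[0,b_1]], b² = 0, S = [[S_2,F],[F*,S_1]] self-adjoint, with j(bS+Sb*) = 0), the operator S_0 = b_0 S_2 + S_2 b_0* + h F* + F h* satisfies b_0 S_0 − S_0 b_0* = 0. Consequently, writing d_0 = i·b_0 (i = √−1), one has d_0 S_0 + S_0 d_0* = 0, so S_0 is a chain map from (E_0, −d_0*) to (E_0, d_0). -/
import Mathlib


/- STATEMENT 3: In the boundary-complex block setting, the induced duality
operator S₀ = b₀S₂ + S₂b₀* + hF* + Fh* satisfies b₀S₀ − S₀b₀* = 0; hence with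
d₀ = i·b₀ one has d₀S₀ + S₀d₀* = 0, i.e. S₀ is a chain map from (E₀, −d₀*)
to (E₀, d₀); moreover S₀ is self-adjoint. -/

open ContinuousLinearMap

noncomputable section

theorem boundary_duality_chain_map
    {E₀ E₁ : Type*}
    [NormedAddCommGroup E₀] [InnerProductSpace ℂ E₀] [CompleteSpace E₀]
    [NormedAddCommGroup E₁] [InnerProductSpace ℂ E₁] [CompleteSpace E₁]
    (b₀ S₂ : E₀ →L[ℂ] E₀) (b₁ S₁ : E₁ →L[ℂ] E₁) (h F : E₁ →L[ℂ] E₀)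
    (hS₂ : IsSelfAdjoint S₂) (hS₁ : IsSelfAdjoint S₁)
    (hb₀ : b₀ ∘L b₀ = 0)
    (h1 : b₀ ∘L h + h ∘L b₁ = 0)
    (h2 : b₁ ∘L adjoint F + adjoint F ∘L adjoint b₀ = -(S₁ ∘L adjoint h))
    (h3 : b₀ ∘L F + F ∘L adjoint b₁ = -(h ∘L S₁)) :
    letI S₀ : E₀ →L[ℂ] E₀ :=
      b₀ ∘L S₂ + S₂ ∘L adjoint b₀ + h ∘L adjoint F + F ∘L adjoint h
    letI d₀ : E₀ →L[ℂ] E₀ := (Complex.I : ℂ) • b₀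
    (b₀ ∘L S₀ - S₀ ∘L adjoint b₀ = 0) ∧
    (d₀ ∘L S₀ + S₀ ∘L adjoint d₀ = 0) ∧
    IsSelfAdjoint S₀ := by
  set S₀ : E₀ →L[ℂ] E₀ :=
    b₀ ∘L S₂ + S₂ ∘L adjoint b₀ + h ∘L adjoint F + F ∘L adjoint h with hS₀
  have hb₀' : adjoint b₀ ∘L adjoint b₀ = 0 := by
    rw [← adjoint_comp, hb₀]; simp
  have e1 : b₀ ∘L h = -(h ∘L b₁) := eq_neg_of_add_eq_zero_left h1
  have e2 : adjoint F ∘L adjoint b₀ = -(S₁ ∘L adjoint h) - b₁ ∘L adjoint F :=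
    eq_sub_of_add_eq' h2
  have e3 : b₀ ∘L F = -(h ∘L S₁) - F ∘L adjoint b₁ := eq_sub_of_add_eq h3
  have e4 : adjoint h ∘L adjoint b₀ = -(adjoint b₁ ∘L adjoint h) := by
    have h1' : adjoint (b₀ ∘L h + h ∘L b₁) = 0 := by rw [h1]; simp
    rw [map_add, adjoint_comp, adjoint_comp] at h1'
    exact eq_neg_of_add_eq_zero_left h1'
  have key : b₀ ∘L S₀ - S₀ ∘L adjoint b₀ = 0 := by
    rw [hS₀]
    simp only [comp_add, add_comp, ← comp_assoc, hb₀, zero_comp]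
    simp only [comp_assoc, hb₀', comp_zero, e1, e2, e3, e4, neg_comp, comp_neg,
      comp_sub, sub_comp, neg_sub, comp_add, add_comp]
    abel
  refine ⟨key, ?_, ?_⟩
  · rw [show adjoint ((Complex.I : ℂ) • b₀) = (starRingEnd ℂ Complex.I) • adjoint b₀
      from LinearIsometryEquiv.map_smulₛₗ adjoint _ _]
    simp only [smul_comp, comp_smul, Complex.conj_I, neg_smul, comp_neg, ← smul_neg,
      ← smul_add]
    rw [← sub_eq_add_neg, key, smul_zero]
  · rw [isSelfAdjoint_iff', hS₀]
    simp only [star_eq_adjoint, map_add, adjoint_comp, adjoint_adjoint,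
      hS₂.adjoint_eq, hS₁.adjoint_eq]
    abel
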